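/- arXiv:2009.04738 — 2 statements merged into one kernel-verified Lean document; each statement's English description precedes it below -/
import Mathlib

section
/- For every graph G, the signless Laplacian spectral radius satisfies q_1(G) ≤ max over vertices v of (d_v + (1/d_v) · Σ_{w ∈ N(v)} d_w), where the maximum is over vertices v of positive degree (and q_1(G) = 0 if G has no edges). -/
open Matrix

noncomputable section
open scoped Classical

/-- The complete split graph `S_{n,k} = K_k ∇ (n-k)K_1`. -/
def splitGraph (n k : ℕ) : SimpleGraph (Fin n) where
  Adj i j := i ≠ j ∧ (i.val < k ∨ j.val < k)
  symm := ⟨fun i j h => ⟨h.1.symm, h.2.symm⟩⟩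
  loopless := ⟨fun i h => h.1 rfl⟩

/-- The graph `K_m ∪ (n-m)K_1`: a clique on the first `m` vertices plus isolated vertices. -/
def cliqueUnion (n m : ℕ) : SimpleGraph (Fin n) where
  Adj i j := i ≠ j ∧ i.val < m ∧ j.val < m
  symm := ⟨fun i j h => ⟨h.1.symm, h.2.2, h.2.1⟩⟩
  loopless := ⟨fun i h => h.1 rfl⟩

/-- The `k`-fan `F_k = K_1 ∇ kK_2`: vertex `0` is the common center, and for `m < k` the
vertices `2m+1, 2m+2` form the `m`-th edge of the matching joined to the center. -/
def fan (k : ℕ) : SimpleGraph (Fin (2 * k + 1)) where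
  Adj i j := i ≠ j ∧ (i = 0 ∨ j = 0 ∨ (i.val - 1) / 2 = (j.val - 1) / 2)
  symm := by
    refine ⟨?_⟩
    rintro i j ⟨h1, h2⟩
    refine ⟨h1.symm, ?_⟩
    rcases h2 with h | h | h
    · exact Or.inr (Or.inl h)
    · exact Or.inl h
    · exact Or.inr (Or.inr h.symm)
  loopless := ⟨fun i h => h.1 rfl⟩

/-- `G` contains a (not necessarily induced) subgraph isomorphic to `H`. -/
def ContainsSub {V W : Type*} (G : SimpleGraph V) (H : SimpleGraph W) : Prop :=
  ∃ f : W → V, Function.Injective f ∧ ∀ a b, H.Adj a b → G.Adj (f a) (f b)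

/-- `G` is `F_k`-free. -/
def FanFree {V : Type*} (G : SimpleGraph V) (k : ℕ) : Prop := ¬ ContainsSub G (fan k)

/-- `G` contains `k` pairwise disjoint edges. -/
def HasMatching {V : Type*} (G : SimpleGraph V) (k : ℕ) : Prop :=
  ∃ p : Fin k → V × V, (∀ i, G.Adj (p i).1 (p i).2) ∧
    ∀ i j, i ≠ j → (p i).1 ≠ (p j).1 ∧ (p i).1 ≠ (p j).2 ∧
      (p i).2 ≠ (p j).1 ∧ (p i).2 ≠ (p j).2

/-- The signless Laplacian matrix `Q(G) = D(G) + A(G)`. -/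
def signlessLaplacian {V : Type*} [Fintype V] (G : SimpleGraph V) : Matrix V V ℝ :=
  Matrix.of fun i j =>
    (if i = j then ((G.neighborSet i).ncard : ℝ) else 0) + (if G.Adj i j then 1 else 0)

/-- The signless Laplacian spectral radius `q_1(G)`: the largest eigenvalue of `Q(G)`. -/
def q1 {V : Type*} [Fintype V] (G : SimpleGraph V) : ℝ :=
  sSup (spectrum ℝ (signlessLaplacian G))

/-- The largest eigenvalue of a real matrix. -/
def lam1 {m : Type*} [Fintype m] [DecidableEq m] (M : Matrix m m ℝ) : ℝ :=
  sSup (spectrum ℝ M)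

/-! Gershgorin's circle theorem applied to `D⁻¹ Q D`, where `D` is the diagonal matrix of degrees
(with weight `1` at isolated vertices), which has the spectrum of `Q`: the disc of a vertex `v` of
positive degree is centred at `d_v` with radius `(1/d_v) Σ_{w ∈ N(v)} d_w`, and the disc of an
isolated vertex is the point `0`. -/

theorem eigenvalue_mem_closedBall_of_weights {K n : Type*} [NormedField K] [Fintype n]
    [DecidableEq n] {A : Matrix n n K} {w : n → K} (hw : ∀ i, w i ≠ 0) {μ : K}
    (hμ : μ ∈ spectrum K A) :
    ∃ k, μ ∈ Metric.closedBall (A k k) ((∑ j ∈ Finset.univ.erase k, ‖A k j‖ * ‖w j‖) / ‖w k‖) := by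
  let u : (Matrix n n K)ˣ :=
    ⟨diagonal w, diagonal w⁻¹, by simp [diagonal_mul_diagonal, fun i => mul_inv_cancel₀ (hw i)],
      by simp [diagonal_mul_diagonal, fun i => inv_mul_cancel₀ (hw i)]⟩
  have hentry : ∀ i j,
      ((u⁻¹ : (Matrix n n K)ˣ) * A * (u : Matrix n n K)) i j = (w i)⁻¹ * A i j * w j := by
    simp [u, diagonal_mul, mul_diagonal]
  rw [← spectrum.units_conjugate' (u := u), ← Matrix.spectrum_toLin',
    ← Module.End.hasEigenvalue_iff_mem_spectrum] at hμ
  obtain ⟨k, hk⟩ := eigenvalue_mem_ball hμ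
  refine ⟨k, ?_⟩
  have hcenter : (w k)⁻¹ * A k k * w k = A k k := by field_simp [hw k]
  have hradius : ∑ j ∈ Finset.univ.erase k, ‖(w k)⁻¹ * A k j * w j‖ =
      (∑ j ∈ Finset.univ.erase k, ‖A k j‖ * ‖w j‖) / ‖w k‖ := by
    simp only [Finset.sum_div, norm_mul, norm_inv]; ring_nf
  simpa only [hentry, hcenter, hradius] using hk

namespace SimpleGraph

variable {V : Type*} [Fintype V] (G : SimpleGraph V)

def avgNeighborDegree (v : V) : ℝ :=
  1 / ((G.neighborSet v).ncard : ℝ) *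
    ∑ w ∈ (G.neighborSet v).toFinset, ((G.neighborSet w).ncard : ℝ)

lemma avgNeighborDegree_nonneg (v : V) : 0 ≤ G.avgNeighborDegree v := by
  unfold avgNeighborDegree
  positivity

lemma ncard_neighborSet_pos_of_adj {v w : V} (h : G.Adj v w) : 0 < (G.neighborSet v).ncard :=
  (Set.ncard_pos (Set.toFinite _)).mpr ⟨w, h⟩

lemma signlessLaplacian_apply_self (v : V) :
    signlessLaplacian G v v = (G.neighborSet v).ncard := by
  simp [signlessLaplacian]

lemma sum_erase_abs_signlessLaplacian_mul (v : V) (g : V → ℝ) :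
    ∑ j ∈ Finset.univ.erase v, |signlessLaplacian G v j| * g j =
      ∑ j ∈ (G.neighborSet v).toFinset, g j := by
  have hfilter : (Finset.univ.erase v).filter (G.Adj v) = (G.neighborSet v).toFinset := by
    ext j
    simpa using fun h : G.Adj v j => h.ne'
  rw [← hfilter, Finset.sum_filter]
  refine Finset.sum_congr rfl fun j hj => ?_
  by_cases h : G.Adj v j <;> simp [signlessLaplacian, (Finset.ne_of_mem_erase hj).symm, h]

theorem eq_zero_or_le_of_mem_spectrum_signlessLaplacian {μ : ℝ}
    (hμ : μ ∈ spectrum ℝ (signlessLaplacian G)) :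
    μ = 0 ∨ ∃ v, 0 < (G.neighborSet v).ncard ∧
      μ ≤ (G.neighborSet v).ncard + G.avgNeighborDegree v := by
  set d : V → ℝ := fun v => (G.neighborSet v).ncard
  obtain ⟨v, hv⟩ := eigenvalue_mem_closedBall_of_weights (w := fun v => max (d v) 1)
    (fun v => (zero_lt_one.trans_le (le_max_right _ _)).ne') hμ
  simp only [signlessLaplacian_apply_self, Metric.mem_closedBall, Real.dist_eq,
    Real.norm_eq_abs, G.sum_erase_abs_signlessLaplacian_mul] at hv
  have hweight : ∀ u, 0 < (G.neighborSet u).ncard → |max (d u) 1| = d u := fun u hu => by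
    have : (1 : ℝ) ≤ d u := Nat.one_le_cast.mpr hu
    rw [max_eq_left this, abs_of_nonneg (zero_le_one.trans this)]
  rcases Nat.eq_zero_or_pos (G.neighborSet v).ncard with hzero | hpos
  · left
    have hempty : (G.neighborSet v).toFinset = ∅ := by
      simpa using (Set.ncard_eq_zero (Set.toFinite _)).mp hzero
    simpa [hempty, hzero] using hv
  · right
    refine ⟨v, hpos, ?_⟩
    rw [Finset.sum_congr rfl fun u hu => hweight u
      (G.ncard_neighborSet_pos_of_adj (Set.mem_toFinset.mp hu).symm),
      hweight v hpos] at hv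
    rw [avgNeighborDegree, one_div_mul_eq_div]
    linarith [le_abs_self (μ - d v)]

end SimpleGraph

/-- `q_1(G) ≤ max_v (d_v + (1/d_v) Σ_{w ∈ N(v)} d_w)`, the maximum being over
vertices of positive degree, and `q_1(G) = 0` if `G` has no edges. -/
theorem stmt2 {V : Type*} [Fintype V] (G : SimpleGraph V) :
    (G.edgeSet = ∅ → q1 G = 0) ∧
    (G.edgeSet.Nonempty →
      q1 G ≤ sSup {x : ℝ | ∃ v : V, 0 < (G.neighborSet v).ncard ∧
        x = ((G.neighborSet v).ncard : ℝ) + (1 / ((G.neighborSet v).ncard : ℝ)) *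
              ∑ w ∈ (G.neighborSet v).toFinset, ((G.neighborSet w).ncard : ℝ)}) := by
  refine ⟨fun hE => ?_, fun hE => ?_⟩
  · have hdeg : ∀ v, ¬ 0 < (G.neighborSet v).ncard := fun v hv => by
      obtain ⟨w, hw⟩ := (Set.ncard_pos (Set.toFinite _)).mp hv
      simpa [hE] using (G.mem_edgeSet.mpr hw)
    have hspec : spectrum ℝ (signlessLaplacian G) ⊆ {0} := fun μ hμ =>
      (G.eq_zero_or_le_of_mem_spectrum_signlessLaplacian hμ).resolve_right (by simp [hdeg])
    rcases Set.subset_singleton_iff_eq.mp hspec with h | h <;> simp [q1, h]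
  · obtain ⟨⟨a, b⟩, hab⟩ := hE
    let S := {x : ℝ | ∃ v : V, 0 < (G.neighborSet v).ncard ∧
      x = (G.neighborSet v).ncard + G.avgNeighborDegree v}
    change sSup (spectrum ℝ (signlessLaplacian G)) ≤ sSup S
    have hbdd : BddAbove S := by
      refine ((Set.finite_range fun v => (G.neighborSet v).ncard + G.avgNeighborDegree v).subset
        ?_).bddAbove
      rintro x ⟨v, -, rfl⟩
      exact ⟨v, rfl⟩
    have hS_nonneg : 0 ≤ sSup S :=
      le_csSup_of_le hbdd ⟨a, G.ncard_neighborSet_pos_of_adj hab, rfl⟩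
        (add_nonneg (Nat.cast_nonneg _) (G.avgNeighborDegree_nonneg a))
    refine Real.sSup_le (fun μ hμ => ?_) hS_nonneg
    rcases G.eq_zero_or_le_of_mem_spectrum_signlessLaplacian hμ with rfl | ⟨v, hv, hμv⟩
    · exact hS_nonneg
    · exact hμv.trans (le_csSup hbdd ⟨v, hv, rfl⟩)

end
end

section
/- Let α ≥ 1 and n > (5α + 3)/2. If G is a graph on n vertices with matching number α and e(G) = αn - α(α+1)/2 edges, then G is isomorphic to the complete split graph S_{n,α}. -/
open Matrix

noncomputable section
open scoped Classical

/-! Fix a maximum matching `X i Y i` (`i < α`) and let `U` be the `n - 2α` unmatched vertices,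
which are independent. Short augmenting paths show that a matching edge with at least three edges
to `U` has all of them at one endpoint `X i`, and that two such edges `i, j` are not joined by
`Y i Y j`. A double count of the edges of `G`, matching edge by matching edge, then shows that
`e(G) = αn - α(α+1)/2` forces `s (2(n - 2α) - α - 3) ≤ 0`, where `s` is the number of matching
edges with at most two edges to `U`; so `s = 0`. Now every edge of `G` meets the clique `{X i}`,
i.e. `G ≤ S_{n,α}`, and equality of edge numbers gives `G = S_{n,α}`. -/

open Finset SimpleGraph

section MatchingFamily

variable {V ι κ : Type*} {G : SimpleGraph V}

def VertexDisjoint (e f : V × V) : Prop :=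
  e.1 ≠ f.1 ∧ e.1 ≠ f.2 ∧ e.2 ≠ f.1 ∧ e.2 ≠ f.2

lemma VertexDisjoint.symm {e f : V × V} (h : VertexDisjoint e f) : VertexDisjoint f e :=
  ⟨h.1.symm, h.2.2.1.symm, h.2.1.symm, h.2.2.2.symm⟩

def IsMatchingFamily (G : SimpleGraph V) (p : ι → V × V) : Prop :=
  (∀ i, G.Adj (p i).1 (p i).2) ∧ Pairwise fun i j => VertexDisjoint (p i) (p j)

lemma hasMatching_iff {k : ℕ} : HasMatching G k ↔ ∃ p : Fin k → V × V, IsMatchingFamily G p :=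
  Iff.rfl

namespace IsMatchingFamily

variable {p : ι → V × V} (hp : IsMatchingFamily G p)
include hp

lemma comp {f : κ → ι} (hf : Function.Injective f) : IsMatchingFamily G (p ∘ f) :=
  ⟨fun i => hp.1 (f i), fun _ _ hij => hp.2 (hf.ne hij)⟩

lemma ite_swap (s : ι → Prop) [DecidablePred s] :
    IsMatchingFamily G fun i => if s i then (p i).swap else p i := by
  refine ⟨fun i => ?_, fun i j hij => ?_⟩
  · dsimp only
    split_ifs
    exacts [(hp.1 i).symm, hp.1 i]
  · have := hp.2 hij
    dsimp only [VertexDisjoint] at this ⊢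
    split_ifs <;> grind

lemma hasMatching_of_le_card [Fintype ι] {k : ℕ} (hk : k ≤ Fintype.card ι) :
    HasMatching G k := by
  obtain ⟨f⟩ := Function.Embedding.nonempty_of_card_le (by simpa using hk :
    Fintype.card (Fin k) ≤ Fintype.card ι)
  exact ⟨_, hp.comp f.injective⟩

lemma sumElim {q : κ → V × V} (hq : IsMatchingFamily G q)
    (hpq : ∀ i r, VertexDisjoint (p i) (q r)) : IsMatchingFamily G (Sum.elim p q) := by
  refine ⟨Sum.forall.2 ⟨hp.1, hq.1⟩, ?_⟩
  rintro (i | r) (j | s) h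
  · exact hp.2 fun hij => h (congrArg _ hij)
  · exact hpq i s
  · exact (hpq j r).symm
  · exact hq.2 fun hrs => h (congrArg _ hrs)

end IsMatchingFamily

theorem IsMatchingFamily.hasMatching_succ_of_exchange {a k : ℕ} {p : Fin a → V × V}
    (hp : IsMatchingFamily G p) (D : Finset (Fin a)) {q : Fin k → V × V}
    (hq : IsMatchingFamily G q) (hD : #D < k) (hqp : ∀ r, ∀ i ∉ D, VertexDisjoint (q r) (p i)) :
    HasMatching G (a + 1) := by
  have hrest := hp.comp (Subtype.val_injective (p := fun i => i ∉ D))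
  refine (hrest.sumElim hq fun i r => (hqp r i i.2).symm).hasMatching_of_le_card ?_
  have := card_le_univ D
  simp only [Fintype.card_sum, Fintype.card_subtype_compl, Fintype.card_coe, Fintype.card_fin]
  omega

end MatchingFamily

section SplitGraph

variable {V : Type*}

def splitGraphOn (K : Finset V) : SimpleGraph V where
  Adj v w := v ≠ w ∧ (v ∈ K ∨ w ∈ K)
  symm := ⟨fun _ _ h => ⟨h.1.symm, h.2.symm⟩⟩
  loopless := ⟨fun _ h => h.1 rfl⟩

lemma splitGraph_eq_splitGraphOn (n a : ℕ) : splitGraph n a = splitGraphOn {i | i.val < a} := by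
  ext; simp [splitGraph, splitGraphOn]

lemma nonempty_iso_splitGraph {n a : ℕ} (ha : a ≤ n) (K : Finset (Fin n)) (hK : #K = a) :
    Nonempty (splitGraphOn K ≃g splitGraph n a) := by
  obtain ⟨σ, hσ⟩ := Equiv.Perm.exists_map_finset_eq K {i | i.val < a}
    (by rw [hK, Fin.card_filter_val_lt, min_eq_right ha])
  rw [splitGraph_eq_splitGraphOn, ← hσ]
  exact ⟨{ toEquiv := σ, map_rel_iff' := by simp [splitGraphOn] }⟩

variable [Fintype V]

lemma two_mul_ncard_edgeSet_splitGraphOn (K : Finset V) :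
    2 * (splitGraphOn K).edgeSet.ncard + #K * (#K + 1) = 2 * (#K * Fintype.card V) := by
  have hdeg : ∀ v, (splitGraphOn K).degree v + (if v ∈ K then 1 else 0) =
      if v ∈ K then Fintype.card V else #K := fun v => by
    rw [← card_neighborFinset_eq_degree, neighborFinset_eq_filter]
    split_ifs with hv
    · rw [filter_congr (q := (· ≠ v)) fun w _ => by simp [splitGraphOn, hv, ne_comm],
        filter_ne' univ v, card_erase_of_mem (mem_univ v), card_univ]
      have : 0 < Fintype.card V := Fintype.card_pos_iff.2 ⟨v⟩
      omega
    · rw [filter_congr (q := (· ∈ K)) fun w _ => by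
        simp [splitGraphOn, hv]; exact fun hw h => hv (h ▸ hw), filter_mem_eq_inter, univ_inter]
      rfl
  have hsum := sum_congr rfl fun v (_ : v ∈ univ) => hdeg v
  simp only [sum_add_distrib, sum_boole, sum_ite, sum_const, smul_eq_mul, filter_mem_eq_inter,
    univ_inter, Nat.cast_id, sum_degrees_eq_twice_card_edges] at hsum
  have hc : #K + #{v | v ∉ K} = Fintype.card V := by
    simpa [filter_mem_eq_inter] using card_filter_add_card_filter_not (s := univ) (· ∈ K)
  rw [← coe_edgeFinset, Set.ncard_coe_finset, ← hc]
  rw [← hc] at hsum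
  nlinarith

end SplitGraph

section OrientedMaxMatching

variable {V : Type*} {G : SimpleGraph V} {a : ℕ} {X Y : Fin a → V}

def crossCount (G : SimpleGraph V) (X Y : Fin a → V) (i j : Fin a) : ℕ :=
  G.adjMatrix ℕ (X i) (X j) + G.adjMatrix ℕ (X i) (Y j) +
    G.adjMatrix ℕ (Y i) (X j) + G.adjMatrix ℕ (Y i) (Y j)

lemma crossCount_le_four (G : SimpleGraph V) (X Y : Fin a → V) (i j : Fin a) :
    crossCount G X Y i j ≤ 4 := by
  simp only [crossCount, adjMatrix_apply]
  split_ifs <;> omega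

lemma adj_of_crossCount_eq_four {i j : Fin a} (h : crossCount G X Y i j = 4) :
    G.Adj (Y i) (X j) ∧ G.Adj (Y i) (Y j) := by
  simp only [crossCount, adjMatrix_apply] at h
  split_ifs at h <;> first | omega | exact ⟨‹_›, ‹_›⟩

variable [Fintype V]

def unmatched (X Y : Fin a → V) : Finset V := (univ.biUnion fun i => {X i, Y i})ᶜ

lemma mem_unmatched {u : V} : u ∈ unmatched X Y ↔ ∀ i, X i ≠ u ∧ Y i ≠ u := by
  simp [unmatched, eq_comm]

def freeNbrs (G : SimpleGraph V) (X Y : Fin a → V) (v : V) : Finset V :=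
  {u ∈ unmatched X Y | G.Adj v u}

lemma sum_adjMatrix_unmatched (v : V) :
    ∑ u ∈ unmatched X Y, G.adjMatrix ℕ v u = #(freeNbrs G X Y v) := by
  rw [freeNbrs, card_filter]
  simp [adjMatrix_apply]

def freeCount (G : SimpleGraph V) (X Y : Fin a → V) (i : Fin a) : ℕ :=
  #(freeNbrs G X Y (X i)) + #(freeNbrs G X Y (Y i))

def fullPartners (G : SimpleGraph V) (X Y : Fin a → V) (j : Fin a) : Finset (Fin a) :=
  {i | 3 ≤ freeCount G X Y i ∧ crossCount G X Y i j = 4}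

lemma crossCount_le (G : SimpleGraph V) (X Y : Fin a → V) (i j : Fin a) :
    crossCount G X Y i j ≤ 3 + (if freeCount G X Y i ≤ 2 then 1 else 0) +
      (if i ∈ fullPartners G X Y j then 1 else 0) := by
  have := crossCount_le_four G X Y i j
  simp only [fullPartners, mem_filter, mem_univ, true_and]
  split_ifs <;> omega

structure IsOrientedMaxMatching (G : SimpleGraph V) (X Y : Fin a → V) : Prop where
  isMatchingFamily : IsMatchingFamily G fun i => (X i, Y i)
  not_hasMatching : ¬ HasMatching G (a + 1)
  card_freeNbrs_le : ∀ i, #(freeNbrs G X Y (Y i)) ≤ #(freeNbrs G X Y (X i))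

theorem exists_isOrientedMaxMatching (h : HasMatching G a) (h' : ¬ HasMatching G (a + 1)) :
    ∃ X Y : Fin a → V, IsOrientedMaxMatching G X Y := by
  obtain ⟨p, hp⟩ := hasMatching_iff.1 h
  set s : Fin a → Prop := fun i => #(freeNbrs G (fun i => (p i).1) (fun i => (p i).2) (p i).1) <
    #(freeNbrs G (fun i => (p i).1) (fun i => (p i).2) (p i).2)
  set p' : Fin a → V × V := fun i => if s i then (p i).swap else p i with hp'
  have hpair : ∀ i, ({(p' i).1, (p' i).2} : Finset V) = {(p i).1, (p i).2} := fun i => by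
    by_cases hi : s i <;> simp [hp', hi, pair_comm]
  have hfree : freeNbrs G (fun i => (p' i).1) (fun i => (p' i).2) =
      freeNbrs G (fun i => (p i).1) (fun i => (p i).2) := by
    unfold freeNbrs unmatched
    rw [biUnion_congr rfl fun i _ => hpair i]
  refine ⟨fun i => (p' i).1, fun i => (p' i).2, hp.ite_swap s, h', fun i => ?_⟩
  rw [hfree]
  by_cases hi : s i
  · simpa only [hp', if_pos hi, Prod.fst_swap, Prod.snd_swap] using hi.le
  · simpa only [hp', if_neg hi] using not_lt.1 hi

namespace IsOrientedMaxMatching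

variable (hM : IsOrientedMaxMatching G X Y)
include hM

lemma adj (i : Fin a) : G.Adj (X i) (Y i) := hM.isMatchingFamily.1 i

lemma X_injective : Function.Injective X := fun i j h => by
  by_contra hij; exact (hM.isMatchingFamily.2 hij).1 h

lemma Y_injective : Function.Injective Y := fun i j h => by
  by_contra hij; exact (hM.isMatchingFamily.2 hij).2.2.2 h

lemma X_ne_Y (i j : Fin a) : X i ≠ Y j := by
  obtain rfl | hij := eq_or_ne i j
  · exact (hM.adj i).ne
  · exact (hM.isMatchingFamily.2 hij).2.1

lemma false_of_exchange (D : Finset (Fin a)) {k : ℕ} {q : Fin k → V × V}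
    (hq : IsMatchingFamily G q) (hD : #D < k)
    (hqp : ∀ r, ∀ i ∉ D, VertexDisjoint (q r) (X i, Y i)) : False :=
  hM.not_hasMatching (hM.isMatchingFamily.hasMatching_succ_of_exchange D hq hD hqp)

lemma not_adj_of_mem_unmatched {u v : V} (hu : u ∈ unmatched X Y) (hv : v ∈ unmatched X Y) :
    ¬ G.Adj u v := by
  intro huv
  refine hM.false_of_exchange ∅ (q := ![(u, v)]) ⟨fun r => by simpa, ?_⟩ (by simp) ?_ <;>
  · intro r x hx
    fin_cases r; try fin_cases x
    all_goals simp_all [VertexDisjoint, mem_unmatched, eq_comm]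

lemma eq_of_adj_X_of_adj_Y {i : Fin a} {u v : V} (hu : u ∈ unmatched X Y)
    (hv : v ∈ unmatched X Y) (hXu : G.Adj (X i) u) (hYv : G.Adj (Y i) v) : u = v := by
  by_contra huv
  refine hM.false_of_exchange {i} (q := ![(X i, u), (Y i, v)])
    ⟨fun r => by fin_cases r <;> simpa, ?_⟩ (by simp) ?_ <;>
  · intro r x hx
    fin_cases r <;> try fin_cases x
    all_goals simp_all [VertexDisjoint, mem_unmatched, hM.X_injective.eq_iff,
      hM.Y_injective.eq_iff, hM.X_ne_Y, (hM.X_ne_Y _ _).symm, eq_comm]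

lemma not_adj_Y_Y {i j : Fin a} (hij : i ≠ j) {u v : V} (hu : u ∈ unmatched X Y)
    (hv : v ∈ unmatched X Y) (huv : u ≠ v) (hXu : G.Adj (X i) u) (hXv : G.Adj (X j) v) :
    ¬ G.Adj (Y i) (Y j) := by
  intro hYY
  refine hM.false_of_exchange {i, j} (q := ![(X i, u), (X j, v), (Y i, Y j)])
    ⟨fun r => by fin_cases r <;> simpa, ?_⟩ (card_le_two.trans_lt (by simp)) ?_ <;>
  · intro r x hx
    fin_cases r <;> try fin_cases x
    all_goals simp_all [VertexDisjoint, mem_unmatched, hM.X_injective.eq_iff,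
      hM.Y_injective.eq_iff, hM.X_ne_Y, (hM.X_ne_Y _ _).symm, eq_comm]

lemma not_adj_Y_X_and_adj_Y_Y {i₁ i₂ j : Fin a} (h₁₂ : i₁ ≠ i₂) (h₁ : i₁ ≠ j) (h₂ : i₂ ≠ j)
    {u₁ u₂ : V} (hu₁ : u₁ ∈ unmatched X Y) (hu₂ : u₂ ∈ unmatched X Y) (hu : u₁ ≠ u₂)
    (hXu₁ : G.Adj (X i₁) u₁) (hXu₂ : G.Adj (X i₂) u₂) :
    ¬ (G.Adj (Y i₁) (X j) ∧ G.Adj (Y i₂) (Y j)) := by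
  rintro ⟨hYX, hYY⟩
  refine hM.false_of_exchange {i₁, i₂, j}
    (q := ![(X i₁, u₁), (X i₂, u₂), (Y i₁, X j), (Y i₂, Y j)])
    ⟨fun r => by fin_cases r <;> simpa, ?_⟩ (card_le_three.trans_lt (by simp)) ?_ <;>
  · intro r x hx
    fin_cases r <;> try fin_cases x
    all_goals simp_all [VertexDisjoint, mem_unmatched, hM.X_injective.eq_iff,
      hM.Y_injective.eq_iff, hM.X_ne_Y, (hM.X_ne_Y _ _).symm, eq_comm]

lemma card_freeNbrs_le_one_of_nonempty {i : Fin a} (h : (freeNbrs G X Y (Y i)).Nonempty) :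
    #(freeNbrs G X Y (X i)) ≤ 1 ∧ #(freeNbrs G X Y (Y i)) ≤ 1 := by
  obtain ⟨v, hv⟩ := h
  obtain ⟨u, hu⟩ := card_pos.1 ((card_pos.2 ⟨v, hv⟩).trans_le (hM.card_freeNbrs_le i))
  simp only [freeNbrs, mem_filter] at hu hv
  constructor <;> refine card_le_one.2 fun x hx y hy => ?_ <;>
    simp only [freeNbrs, mem_filter] at hx hy
  · rw [hM.eq_of_adj_X_of_adj_Y hx.1 hv.1 hx.2 hv.2, hM.eq_of_adj_X_of_adj_Y hy.1 hv.1 hy.2 hv.2]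
  · rw [← hM.eq_of_adj_X_of_adj_Y hu.1 hx.1 hu.2 hx.2,
      ← hM.eq_of_adj_X_of_adj_Y hu.1 hy.1 hu.2 hy.2]

lemma freeNbrs_Y_eq_empty {i : Fin a} (hi : 3 ≤ freeCount G X Y i) : freeNbrs G X Y (Y i) = ∅ := by
  by_contra h
  have := hM.card_freeNbrs_le_one_of_nonempty (nonempty_iff_ne_empty.2 h)
  unfold freeCount at hi
  omega

lemma freeCount_eq {i : Fin a} (hi : 3 ≤ freeCount G X Y i) :
    freeCount G X Y i = #(freeNbrs G X Y (X i)) := by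
  rw [freeCount, hM.freeNbrs_Y_eq_empty hi, card_empty, add_zero]

lemma not_adj_Y_of_mem_unmatched {i : Fin a} (hi : 3 ≤ freeCount G X Y i) {u : V}
    (hu : u ∈ unmatched X Y) : ¬ G.Adj (Y i) u := fun h => by
  have hmem : u ∈ freeNbrs G X Y (Y i) := mem_filter.2 ⟨hu, h⟩
  rw [hM.freeNbrs_Y_eq_empty hi] at hmem
  exact notMem_empty u hmem

lemma freeCount_le_card_unmatched {i : Fin a} (hi : 3 ≤ freeCount G X Y i) :
    freeCount G X Y i ≤ #(unmatched X Y) :=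
  hM.freeCount_eq hi ▸ card_filter_le _ _

lemma exists_adj_X_ne {i : Fin a} (hi : 3 ≤ freeCount G X Y i) (v : V) :
    ∃ u ∈ unmatched X Y, u ≠ v ∧ G.Adj (X i) u := by
  obtain ⟨u, hu, huv⟩ :=
    exists_mem_ne (s := freeNbrs G X Y (X i)) (by rw [← hM.freeCount_eq hi]; omega) v
  exact ⟨u, (mem_filter.1 hu).1, huv, (mem_filter.1 hu).2⟩

lemma exists_adj_X {j : Fin a} (hj : 1 ≤ freeCount G X Y j) :
    ∃ v ∈ unmatched X Y, G.Adj (X j) v := by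
  have := hM.card_freeNbrs_le j
  obtain ⟨v, hv⟩ := card_pos.1 (by unfold freeCount at hj; omega : 0 < #(freeNbrs G X Y (X j)))
  exact ⟨v, (mem_filter.1 hv).1, (mem_filter.1 hv).2⟩

lemma not_adj_Y_Y_of_three_le {i j : Fin a} (hij : i ≠ j) (hi : 3 ≤ freeCount G X Y i)
    (hj : 1 ≤ freeCount G X Y j) : ¬ G.Adj (Y i) (Y j) := by
  obtain ⟨v, hv, hXv⟩ := hM.exists_adj_X hj
  obtain ⟨u, hu, huv, hXu⟩ := hM.exists_adj_X_ne hi v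
  exact hM.not_adj_Y_Y hij hu hv huv hXu hXv

lemma crossCount_self (i : Fin a) : crossCount G X Y i i = 2 := by
  simp [crossCount, hM.adj i, (hM.adj i).symm]

lemma sum_univ_eq_sum_add_sum_unmatched (f : V → ℕ) :
    ∑ v, f v = ∑ i, (f (X i) + f (Y i)) + ∑ u ∈ unmatched X Y, f u := by
  have hdisj : ((univ : Finset (Fin a)) : Set (Fin a)).PairwiseDisjoint
      fun i => ({X i, Y i} : Finset V) := by
    intro i _ j _ hij
    simp [Function.onFun, hM.X_injective.eq_iff, hM.Y_injective.eq_iff, hM.X_ne_Y,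
      (hM.X_ne_Y _ _).symm, hij.symm]
  rw [unmatched, ← sum_add_sum_compl (univ.biUnion fun i => {X i, Y i}), sum_biUnion hdisj]
  simp only [sum_pair (hM.X_ne_Y _ _)]

lemma card_unmatched_add : #(unmatched X Y) + 2 * a = Fintype.card V := by
  have := hM.sum_univ_eq_sum_add_sum_unmatched fun _ => 1
  simp only [sum_const, card_univ, smul_eq_mul, mul_one, Fintype.card_fin] at this
  omega

lemma two_mul_ncard_edgeSet :
    2 * G.edgeSet.ncard = ∑ j, (2 * freeCount G X Y j + ∑ i, crossCount G X Y i j) := by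
  have hrow : ∀ v, G.degree v =
      ∑ j, (G.adjMatrix ℕ v (X j) + G.adjMatrix ℕ v (Y j)) + #(freeNbrs G X Y v) := fun v => by
    rw [← sum_adjMatrix_unmatched, ← hM.sum_univ_eq_sum_add_sum_unmatched]
    simpa [adjMatrix_apply] using G.degree_eq_sum_if_adj (R := ℕ) v
  have hfree : ∀ u ∈ unmatched X Y, #(freeNbrs G X Y u) = 0 := fun u hu => by
    simpa [freeNbrs, filter_eq_empty_iff] using fun x hx => hM.not_adj_of_mem_unmatched hu hx
  have hU : ∑ u ∈ unmatched X Y, G.degree u = ∑ j, freeCount G X Y j := by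
    rw [sum_congr rfl fun u hu => by rw [hrow u, hfree u hu, add_zero], sum_comm]
    refine sum_congr rfl fun j _ => ?_
    rw [freeCount, ← sum_adjMatrix_unmatched, ← sum_adjMatrix_unmatched, ← sum_add_distrib]
    simp only [G.isSymm_adjMatrix.apply]
  rw [← coe_edgeFinset, Set.ncard_coe_finset, ← sum_degrees_eq_twice_card_edges,
    hM.sum_univ_eq_sum_add_sum_unmatched, hU,
    sum_add_distrib (f := fun j => 2 * freeCount G X Y j),
    sum_comm (f := fun j i => crossCount G X Y i j)]
  simp only [hrow, crossCount, freeCount, mul_add, sum_add_distrib, ← mul_sum]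
  ring

lemma card_fullPartners_le_one (j : Fin a) : #(fullPartners G X Y j) ≤ 1 := by
  have hne : ∀ {i}, crossCount G X Y i j = 4 → i ≠ j := fun h hij => by
    subst hij; rw [hM.crossCount_self] at h; omega
  refine card_le_one.2 fun i₁ h₁ i₂ h₂ => ?_
  by_contra h₁₂
  simp only [fullPartners, mem_filter, mem_univ, true_and] at h₁ h₂
  obtain ⟨u₁, hu₁, hXu₁⟩ := hM.exists_adj_X (by omega : 1 ≤ freeCount G X Y i₁)
  obtain ⟨u₂, hu₂, hu, hXu₂⟩ := hM.exists_adj_X_ne h₂.1 u₁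
  exact hM.not_adj_Y_X_and_adj_Y_Y h₁₂ (hne h₁.2) (hne h₂.2) hu₁ hu₂ (Ne.symm hu) hXu₁ hXu₂
    ⟨(adj_of_crossCount_eq_four h₁.2).1, (adj_of_crossCount_eq_four h₂.2).2⟩

lemma fullPartners_eq_empty {j : Fin a} (hj : 1 ≤ freeCount G X Y j) :
    fullPartners G X Y j = ∅ := by
  refine eq_empty_of_forall_notMem fun i hi => ?_
  simp only [fullPartners, mem_filter, mem_univ, true_and] at hi
  have hij : i ≠ j := by rintro rfl; have := hM.crossCount_self i; omega
  exact hM.not_adj_Y_Y_of_three_le hij hi.1 hj (adj_of_crossCount_eq_four hi.2).2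

lemma sum_crossCount_le (j : Fin a) :
    ∑ i, crossCount G X Y i j + 1 + (if freeCount G X Y j ≤ 2 then 1 else 0) ≤
      3 * a + #{i | freeCount G X Y i ≤ 2} + #(fullPartners G X Y j) := by
  have hj : j ∉ fullPartners G X Y j := by
    simp [fullPartners, hM.crossCount_self]
  have hbound : ∑ i, (3 + (if freeCount G X Y i ≤ 2 then 1 else 0) +
      (if i ∈ fullPartners G X Y j then 1 else 0)) =
      3 * a + #{i | freeCount G X Y i ≤ 2} + #(fullPartners G X Y j) := by
    simp [sum_add_distrib, sum_boole, mul_comm]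
  have hle := sum_le_sum fun i (_ : i ∈ univ.erase j) => crossCount_le G X Y i j
  rw [← add_sum_erase _ _ (mem_univ j)] at hbound ⊢
  rw [hM.crossCount_self, if_neg hj] at *
  split_ifs at * <;> omega

lemma two_mul_freeCount_add_card_fullPartners_le (j : Fin a) :
    2 * freeCount G X Y j + #(fullPartners G X Y j) ≤
      if freeCount G X Y j ≤ 2 then 4 else 2 * #(unmatched X Y) := by
  split_ifs with hj
  · obtain h0 | h0 := Nat.eq_zero_or_pos (freeCount G X Y j)
    · have := hM.card_fullPartners_le_one j; omega
    · rw [hM.fullPartners_eq_empty h0, card_empty]; omega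
  · rw [hM.fullPartners_eq_empty (by omega), card_empty]
    have := hM.freeCount_le_card_unmatched (by omega : 3 ≤ freeCount G X Y j)
    omega

theorem three_le_freeCount (hn : 5 * a + 3 < 2 * Fintype.card V)
    (hcard : 2 * G.edgeSet.ncard + a * (a + 1) = 2 * (a * Fintype.card V)) (i : Fin a) :
    3 ≤ freeCount G X Y i := by
  have hcol := sum_le_sum fun j (_ : j ∈ univ) =>
    add_le_add (hM.sum_crossCount_le j) (hM.two_mul_freeCount_add_card_fullPartners_le j)
  simp only [sum_add_distrib, sum_const, card_univ, Fintype.card_fin, smul_eq_mul, sum_boole,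
    sum_ite, Nat.cast_id, ← mul_sum] at hcol
  have h2e := hM.two_mul_ncard_edgeSet
  rw [sum_add_distrib, ← mul_sum] at h2e
  have hbs := card_filter_add_card_filter_not (s := univ) fun j => freeCount G X Y j ≤ 2
  rw [card_univ, Fintype.card_fin] at hbs
  rw [← hM.card_unmatched_add] at hn hcard
  set m := #(unmatched X Y)
  set s := #{j | freeCount G X Y j ≤ 2}
  set b := #{j | ¬ freeCount G X Y j ≤ 2}
  -- Summed over `j`, the two bounds above give `2 m s ≤ (a + 3) s`, while `2 m > a + 3`.
  by_contra hi
  have hs : 1 ≤ s := card_pos.2 ⟨i, by simp; omega⟩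
  have hbm : (s + b) * m = a * m := by rw [hbs]
  nlinarith [Nat.mul_le_mul_right s (show a + 4 ≤ 2 * m by omega)]

lemma le_splitGraphOn (hbig : ∀ i, 3 ≤ freeCount G X Y i) : G ≤ splitGraphOn (univ.image X) := by
  have hcover : ∀ v, v ∉ univ.image X → v ∈ unmatched X Y ∨ ∃ i, Y i = v := by
    intro v hv
    rw [or_iff_not_imp_right, mem_unmatched]
    exact fun hY i => ⟨fun h => hv (h ▸ mem_image_of_mem X (mem_univ i)), fun h => hY ⟨i, h⟩⟩
  intro v w hvw
  refine ⟨hvw.ne, ?_⟩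
  by_contra! h
  rcases hcover v h.1 with hv | ⟨i, rfl⟩ <;> rcases hcover w h.2 with hw | ⟨j, rfl⟩
  · exact hM.not_adj_of_mem_unmatched hv hw hvw
  · exact hM.not_adj_Y_of_mem_unmatched (hbig j) hv hvw.symm
  · exact hM.not_adj_Y_of_mem_unmatched (hbig i) hw hvw
  · obtain rfl | hij := eq_or_ne i j
    · exact G.irrefl hvw
    · exact hM.not_adj_Y_Y_of_three_le hij (hbig i) (by have := hbig j; omega) hvw

lemma card_image_X : #(univ.image X) = a := by
  rw [card_image_of_injective _ hM.X_injective, card_univ, Fintype.card_fin]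

lemma eq_splitGraphOn (hbig : ∀ i, 3 ≤ freeCount G X Y i)
    (hcard : 2 * G.edgeSet.ncard + a * (a + 1) = 2 * (a * Fintype.card V)) :
    G = splitGraphOn (univ.image X) := by
  refine edgeSet_inj.1 (Set.eq_of_subset_of_ncard_le (edgeSet_mono (hM.le_splitGraphOn hbig)) ?_)
  have := two_mul_ncard_edgeSet_splitGraphOn (univ.image X)
  rw [hM.card_image_X] at this
  omega

end IsOrientedMaxMatching

end OrientedMaxMatching

theorem stmt7_general {n a : ℕ} (hn : 5 * a + 3 < 2 * n) (G : SimpleGraph (Fin n))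
    (hmatch : HasMatching G a) (hnomatch : ¬ HasMatching G (a + 1))
    (hcard : G.edgeSet.ncard = a * n - a * (a + 1) / 2) :
    Nonempty (G ≃g splitGraph n a) := by
  obtain ⟨X, Y, hM⟩ := exists_isOrientedMaxMatching hmatch hnomatch
  have hcard' : 2 * G.edgeSet.ncard + a * (a + 1) = 2 * (a * Fintype.card (Fin n)) := by
    obtain ⟨c, hc⟩ := Nat.even_mul_succ_self a
    have : a * (a + 1) ≤ 2 * (a * n) := by nlinarith
    rw [Fintype.card_fin]
    omega
  rw [hM.eq_splitGraphOn (hM.three_le_freeCount (by simpa using hn) hcard') hcard']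
  exact nonempty_iso_splitGraph (by omega) _ hM.card_image_X

/-- if `α ≥ 1`, `n > (5α+3)/2`, `G` has matching number `α` and exactly
`αn - α(α+1)/2` edges, then `G ≅ S_{n,α}`. -/
theorem stmt7 {n a : ℕ} (ha : 1 ≤ a) (hn : 5 * a + 3 < 2 * n) (G : SimpleGraph (Fin n))
    (hmatch : HasMatching G a) (hnomatch : ¬ HasMatching G (a + 1))
    (hcard : G.edgeSet.ncard = a * n - a * (a + 1) / 2) :
    Nonempty (G ≃g splitGraph n a) :=
  stmt7_general hn G hmatch hnomatch hcard
end
end
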